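/- For every even number n ≥ 6, the graph D_n is a nonelementary v-critical, e-critical and Roman saturated finite simple graph with γ_R(D_n) = 4. -/

import Mathlib

open SimpleGraph

/-- A Roman domination function on `G`. -/
def IsRomanFn {V : Type*} (G : SimpleGraph V) (r : V → Fin 3) : Prop :=
  ∀ u, r u = 0 → ∃ v, G.Adj u v ∧ r v = 2

/-- The weight of a Roman domination function. -/
noncomputable def romanWeight {V : Type*} [Fintype V] (r : V → Fin 3) : ℕ :=
  ∑ u, (r u : ℕ)

/-- The Roman domination number of `G`. -/
noncomputable def romanNumber {V : Type*} [Fintype V] (G : SimpleGraph V) : ℕ :=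
  sInf {w | ∃ r : V → Fin 3, IsRomanFn G r ∧ romanWeight r = w}

/-- `G` is vertex critical. -/
def VCritical {V : Type*} [Fintype V] [DecidableEq V] (G : SimpleGraph V) : Prop :=
  ∀ v : V, romanNumber (G.induce {u | u ≠ v}) = romanNumber G - 1

/-- `G` is edge critical. -/
def ECritical {V : Type*} [Fintype V] [DecidableEq V] (G : SimpleGraph V) : Prop :=
  VCritical G ∧ ∀ e ∈ G.edgeSet, ¬ VCritical (G.deleteEdges {e})

/-- `G` is Roman saturated. -/
def RomanSaturated {V : Type*} [Fintype V] (G : SimpleGraph V) : Prop :=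
  ∀ v w : V, v ≠ w → ¬ G.Adj v w →
    romanNumber (G ⊔ SimpleGraph.fromEdgeSet {s(v, w)}) = romanNumber G - 1

/-- `v` is a cut vertex of `G`. -/
def IsCutVertex {V : Type*} [Fintype V] [DecidableEq V] (G : SimpleGraph V) (v : V) : Prop :=
  Nat.card G.ConnectedComponent < Nat.card (G.induce {u | u ≠ v}).ConnectedComponent

/-- The edge relation of the graph `D_n` (on 1-based indices `a, b ∈ {1, …, n}`):
[v_1,v_2]; [v_{n-1},v_n]; [v_j,v_{n-1}] for 3 ≤ j ≤ n-2; [v_r,v_j] for r ∈ {1,2} and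
3 ≤ j ≤ n-2; and all [v_i,v_j] with 3 ≤ i,j ≤ n-2, i ≠ j, except [v_{2j-1},v_{2j}] for
2 ≤ j ≤ (n-2)/2. -/
def DnRel (n a b : ℕ) : Prop :=
  (a = 1 ∧ b = 2) ∨
  (a = n - 1 ∧ b = n) ∨
  (3 ≤ a ∧ a ≤ n - 2 ∧ b = n - 1) ∨
  ((a = 1 ∨ a = 2) ∧ 3 ≤ b ∧ b ≤ n - 2) ∨
  (3 ≤ a ∧ a ≤ n - 2 ∧ 3 ≤ b ∧ b ≤ n - 2 ∧ a ≠ b ∧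
    ¬ ∃ j : ℕ, 2 ≤ j ∧ j ≤ (n - 2) / 2 ∧
      ((a = 2 * j - 1 ∧ b = 2 * j) ∨ (a = 2 * j ∧ b = 2 * j - 1)))

/-- The graph `D_n` on vertices `v_1, …, v_n` (vertex `i : Fin n` represents `v_{i+1}`). -/
def Dgraph (n : ℕ) : SimpleGraph (Fin n) :=
  SimpleGraph.fromRel (fun i j => DnRel n (i.val + 1) (j.val + 1))

/-
A Roman function of weight at most 3 puts 2 on a vertex with at most one non-neighbour (or
uses only 1s on at most three vertices), and one of weight 4 exists as soon as some vertex has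
at most two non-neighbours. In `D_n` every vertex has at least two non-neighbours, and every
vertex except `v_n` has exactly two, so `γ_R(D_n) = 4`. Deleting a vertex `v`, or adding an
edge `vw`, leaves some vertex with a single non-neighbour, so the Roman number drops to 3; it
cannot drop further, since either operation lowers it by at most one. Deleting an edge `ab`
keeps the Roman number at most 4, but if a vertex `w` whose non-neighbours all lie in
`{a, b, v_n}` is deleted as well, every vertex still has two non-neighbours, so the Roman
number stays 4 and `D_n - ab` is not v-critical.
-/

open Finset

section Roman

variable {V : Type*} {G : SimpleGraph V}

lemma IsRomanFn.one_le {r : V → Fin 3} (hr : IsRomanFn G r) {u : V}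
    (h : ∀ z, G.Adj u z → r z ≠ 2) : 1 ≤ (r u : ℕ) := by
  by_contra h0
  obtain ⟨z, hz, hz2⟩ := hr u (Fin.ext (by omega))
  exact h z hz hz2

variable [Fintype V]

lemma romanNumber_le_romanWeight {r : V → Fin 3} (hr : IsRomanFn G r) :
    romanNumber G ≤ romanWeight r :=
  Nat.sInf_le ⟨r, hr, rfl⟩

lemma exists_isRomanFn_romanWeight_eq (G : SimpleGraph V) :
    ∃ r, IsRomanFn G r ∧ romanWeight r = romanNumber G :=
  Nat.sInf_mem (s := {w | ∃ r, IsRomanFn G r ∧ romanWeight r = w})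
    ⟨_, fun _ => 2, fun _ h => absurd h (by decide : (2 : Fin 3) ≠ 0), rfl⟩

lemma sum_le_romanWeight (r : V → Fin 3) (s : Finset V) : ∑ u ∈ s, (r u : ℕ) ≤ romanWeight r :=
  sum_le_sum_of_subset (subset_univ s)

lemma romanWeight_update [DecidableEq V] (r : V → Fin 3) (u : V) (a : Fin 3) :
    romanWeight (Function.update r u a) + r u = romanWeight r + a := by
  unfold romanWeight
  rw [← add_sum_erase _ _ (mem_univ u), ← add_sum_erase _ _ (mem_univ u),
    sum_congr rfl fun x hx => by rw [Function.update_of_ne (ne_of_mem_erase hx)]]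
  simp only [Function.update_self]
  ring

lemma romanNumber_le_of_forall_exists_adj (A B : Finset V)
    (h : ∀ u ∉ A, u ∉ B → ∃ a ∈ A, G.Adj u a) : romanNumber G ≤ 2 * #A + #B := by
  classical
  let r : V → Fin 3 := fun u => if u ∈ A then 2 else if u ∈ B then 1 else 0
  have hr : IsRomanFn G r := by
    intro u hu
    have hA : u ∉ A := fun h' => by simp [r, h'] at hu
    have hB : u ∉ B := fun h' => by simp [r, hA, h'] at hu
    obtain ⟨a, ha, hua⟩ := h u hA hB
    exact ⟨a, hua, by simp [r, ha]⟩
  calc romanNumber G ≤ romanWeight r := romanNumber_le_romanWeight hr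
    _ ≤ ∑ u, (2 * (if u ∈ A then 1 else 0) + (if u ∈ B then 1 else 0)) := by
        refine sum_le_sum fun u _ => ?_
        by_cases hA : u ∈ A <;> by_cases hB : u ∈ B <;> simp [r, hA, hB]
    _ = 2 * #A + #B := by simp [sum_add_distrib, mul_comm]

lemma romanNumber_le_three {x y : V} (h : ∀ u, Gᶜ.Adj x u → u = y) : romanNumber G ≤ 3 := by
  classical
  simpa using romanNumber_le_of_forall_exists_adj (G := G) {x} {y} fun u hx hy =>
    ⟨x, mem_singleton_self x, by_contra fun hux =>
      (notMem_singleton.1 hy) (h u ⟨(notMem_singleton.1 hx).symm, fun h' => hux h'.symm⟩)⟩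

lemma romanNumber_le_four {x p q : V} (h : ∀ u, Gᶜ.Adj x u → u = p ∨ u = q) :
    romanNumber G ≤ 4 := by
  classical
  calc romanNumber G ≤ 2 * #{x} + #{p, q} :=
        romanNumber_le_of_forall_exists_adj _ _ fun u hx hpq => by
          simp only [mem_singleton, mem_insert, not_or] at hx hpq
          refine ⟨x, mem_singleton_self x, by_contra fun hux => ?_⟩
          exact (h u ⟨Ne.symm hx, fun h' => hux h'.symm⟩).elim hpq.1 hpq.2
    _ ≤ 4 := by have := card_le_two (a := p) (b := q); simp; omega

lemma romanNumber_induce_ne_le_three [DecidableEq V] {v x y : V} (hx : x ≠ v) (hy : y ≠ v)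
    (h : ∀ u, Gᶜ.Adj x u → u = v ∨ u = y) : romanNumber (G.induce {u | u ≠ v}) ≤ 3 :=
  romanNumber_le_three (x := ⟨x, hx⟩) (y := ⟨y, hy⟩) fun u hu =>
    Subtype.ext ((h u ⟨fun e => hu.1 (Subtype.ext e), hu.2⟩).resolve_left u.2)

lemma romanNumber_sup_edge_le_three {x w y : V} (h : ∀ u, Gᶜ.Adj x u → u = w ∨ u = y) :
    romanNumber (G ⊔ fromEdgeSet {s(x, w)}) ≤ 3 :=
  romanNumber_le_three fun u hu => (h u ⟨hu.1, fun h' => hu.2 (Or.inl h')⟩).resolve_left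
    fun huw => hu.2 (Or.inr ⟨by simp [huw], hu.1⟩)

lemma romanNumber_le_romanNumber_induce_ne_add_one [DecidableEq V] (v : V) :
    romanNumber G ≤ romanNumber (G.induce {u | u ≠ v}) + 1 := by
  obtain ⟨r, hr, hw⟩ := exists_isRomanFn_romanWeight_eq (G.induce {u | u ≠ v})
  let r' : V → Fin 3 := fun u => if h : u = v then 1 else r ⟨u, h⟩
  have hr' : IsRomanFn G r' := by
    intro u hu
    by_cases huv : u = v
    · simp [r', huv] at hu
    · obtain ⟨z, hz, hz2⟩ := hr ⟨u, huv⟩ (by simpa [r', huv] using hu)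
      have hzv : (z : V) ≠ v := z.2
      exact ⟨z, hz, by simpa [r', hzv] using hz2⟩
  calc romanNumber G ≤ romanWeight r' := romanNumber_le_romanWeight hr'
    _ = romanWeight r + 1 := by
        unfold romanWeight
        rw [Fintype.sum_eq_add_sum_subtype_ne _ v, add_comm]
        simp only [r', dite_true, Fin.isValue, Fin.val_one, add_left_inj]
        exact Fintype.sum_equiv (Equiv.subtypeEquivRight fun _ => Iff.rfl) _ _
          fun x => by rw [dif_neg x.2]; rfl
    _ = _ := by rw [hw]

lemma romanNumber_le_romanNumber_sup_edge_add_one (v w : V) :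
    romanNumber G ≤ romanNumber (G ⊔ fromEdgeSet {s(v, w)}) + 1 := by
  classical
  obtain ⟨r, hr, hw⟩ := exists_isRomanFn_romanWeight_eq (G ⊔ fromEdgeSet {s(v, w)})
  rw [← hw]
  by_cases hG : IsRomanFn G r
  · exact (romanNumber_le_romanWeight hG).trans (Nat.le_succ _)
  -- Some `u` with `r u = 0` is protected only across the new edge; raising `r u` to 1 is enough,
  -- because the other endpoint carries a 2 and so needs no protection.
  obtain ⟨u, hu0, hu⟩ : ∃ u, r u = 0 ∧ ∀ z, G.Adj u z → r z ≠ 2 := by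
    simpa [IsRomanFn] using hG
  obtain ⟨o, huo, ho2⟩ := hr u hu0
  have hnew : s(u, o) = s(v, w) :=
    ((fromEdgeSet_adj _).1 (huo.resolve_left fun h => hu o h ho2)).1
  have hr' : IsRomanFn G (Function.update r u 1) := by
    intro z hz
    have hzu : z ≠ u := by rintro rfl; simp at hz
    rw [Function.update_of_ne hzu] at hz
    obtain ⟨y, hzy, hy2⟩ := hr z hz
    have hyu : y ≠ u := by rintro rfl; simp [hu0] at hy2
    refine ⟨y, hzy.resolve_right fun hzy' => ?_, by rwa [Function.update_of_ne hyu]⟩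
    have he := ((fromEdgeSet_adj _).1 hzy').1
    rw [Set.mem_singleton_iff, ← hnew, Sym2.eq_iff] at he
    rcases he with ⟨rfl, -⟩ | ⟨rfl, -⟩
    · exact hzu rfl
    · simp [ho2] at hz
  calc romanNumber G ≤ romanWeight (Function.update r u 1) := romanNumber_le_romanWeight hr'
    _ = romanWeight r + 1 := by simpa [hu0] using romanWeight_update r u 1

lemma four_le_romanNumber (hcard : 4 ≤ Fintype.card V)
    (h : ∀ v, ∃ u₁ u₂, u₁ ≠ u₂ ∧ Gᶜ.Adj v u₁ ∧ Gᶜ.Adj v u₂) : 4 ≤ romanNumber G := by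
  classical
  obtain ⟨r, hr, hw⟩ := exists_isRomanFn_romanWeight_eq G
  rw [← hw]
  by_cases htwo : ∃ v, r v = 2
  · obtain ⟨v, hv⟩ := htwo
    by_cases hsecond : ∃ w ≠ v, r w = 2
    · obtain ⟨w, hwv, hw2⟩ := hsecond
      calc 4 = ∑ u ∈ {v, w}, (r u : ℕ) := by simp [sum_pair hwv.symm, hv, hw2]
        _ ≤ romanWeight r := sum_le_romanWeight r _
    · push Not at hsecond
      obtain ⟨u₁, u₂, h12, hu₁, hu₂⟩ := h v
      have one_le : ∀ u, Gᶜ.Adj v u → 1 ≤ (r u : ℕ) := fun u hu => hr.one_le fun z hz hz2 => by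
        have hzv : z = v := by_contra fun hzv => hsecond z hzv hz2
        exact ((compl_adj G v u).1 hu).2 (hzv ▸ hz).symm
      calc 4 ≤ (r v : ℕ) + ((r u₁ : ℕ) + r u₂) := by
            have := one_le u₁ hu₁; have := one_le u₂ hu₂; simp [hv]; omega
        _ = ∑ u ∈ {v, u₁, u₂}, (r u : ℕ) := by
            rw [sum_insert (by simp [hu₁.ne, hu₂.ne]), sum_pair h12]
        _ ≤ romanWeight r := sum_le_romanWeight r _
  · push Not at htwo
    calc 4 ≤ ∑ _u : V, 1 := by simpa using hcard
      _ ≤ romanWeight r := sum_le_sum fun u _ => hr.one_le fun z _ => htwo z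

lemma four_le_romanNumber_induce_ne [DecidableEq V] {w : V} (hcard : 5 ≤ Fintype.card V)
    (h : ∀ v ≠ w, ∃ u₁ u₂, u₁ ≠ u₂ ∧ u₁ ≠ w ∧ u₂ ≠ w ∧ Gᶜ.Adj v u₁ ∧ Gᶜ.Adj v u₂) :
    4 ≤ romanNumber (G.induce {u | u ≠ w}) := by
  refine four_le_romanNumber (by rw [Set.card_ne_eq]; omega) fun v => ?_
  obtain ⟨u₁, u₂, h12, h₁, h₂, a₁, a₂⟩ := h v v.2
  exact ⟨⟨u₁, h₁⟩, ⟨u₂, h₂⟩, fun e => h12 (congrArg Subtype.val e),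
    ⟨fun e => a₁.1 (congrArg Subtype.val e), a₁.2⟩, ⟨fun e => a₂.1 (congrArg Subtype.val e), a₂.2⟩⟩

end Roman

lemma SimpleGraph.exists_two_compl_adj_deleteEdges {V : Type*} {G : SimpleGraph V} {a b w : V}
    (hab : G.Adj a b) (haw : Gᶜ.Adj a w) (h : ∃ u₁ u₂, u₁ ≠ u₂ ∧ Gᶜ.Adj a u₁ ∧ Gᶜ.Adj a u₂) :
    ∃ u₁ u₂, u₁ ≠ u₂ ∧ u₁ ≠ w ∧ u₂ ≠ w ∧
      (G.deleteEdges {s(a, b)})ᶜ.Adj a u₁ ∧ (G.deleteEdges {s(a, b)})ᶜ.Adj a u₂ := by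
  have hle : Gᶜ ≤ (G.deleteEdges {s(a, b)})ᶜ := compl_le_compl (deleteEdges_le _)
  obtain ⟨y, hyw, hy⟩ : ∃ y ≠ w, Gᶜ.Adj a y := by
    obtain ⟨u₁, u₂, h12, h₁, h₂⟩ := h
    by_cases h₁w : u₁ = w
    · exact ⟨u₂, fun h₂w => h12 (h₁w.trans h₂w.symm), h₂⟩
    · exact ⟨u₁, h₁w, h₁⟩
  refine ⟨y, b, fun hyb => hy.2 (hyb ▸ hab), hyw, fun hbw => haw.2 (hbw ▸ hab), hle hy, ?_⟩
  exact (compl_adj _ _ _).2 ⟨hab.ne, by simp⟩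

namespace Dgraph

variable {n : ℕ}

/-- Non-adjacency in `D_n` on 0-based indices (`a` stands for `v_{a+1}`): `n - 1` is adjacent
only to `n - 2`, which misses `0` and `1`, and a middle vertex `2 ≤ a ≤ n - 3` misses its
partner `a xor 1` in the deleted matching. -/
def Nonadj (n a b : ℕ) : Prop :=
  (a = n - 1 ∧ b ≠ n - 2) ∨ (b = n - 1 ∧ a ≠ n - 2) ∨
  (a ≤ 1 ∧ b = n - 2) ∨ (b ≤ 1 ∧ a = n - 2) ∨
  (2 ≤ a ∧ a ≤ n - 3 ∧ a ≠ b ∧ a / 2 = b / 2)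

lemma exists_matching_pair_iff {a b : ℕ} :
    (∃ j : ℕ, 2 ≤ j ∧ j ≤ (n - 2) / 2 ∧
      ((a = 2 * j - 1 ∧ b = 2 * j) ∨ (a = 2 * j ∧ b = 2 * j - 1))) ↔
    a ≠ b ∧ (a + 1) / 2 = (b + 1) / 2 ∧ 2 ≤ (a + 1) / 2 ∧ (a + 1) / 2 ≤ (n - 2) / 2 :=
  ⟨fun ⟨j, _⟩ => by omega, fun _ => ⟨(a + 1) / 2, by omega⟩⟩

lemma dnRel_or_iff {k a b : ℕ} (hn : 6 ≤ k + k) (ha : a < k + k) (hb : b < k + k) :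
    DnRel (k + k) (a + 1) (b + 1) ∨ DnRel (k + k) (b + 1) (a + 1) ↔
      a ≠ b ∧ ¬Nonadj (k + k) a b := by
  simp only [DnRel, exists_matching_pair_iff, Nonadj]
  constructor
  · rintro (h | h) <;> rcases h with h | h | h | h | h <;> omega
  · grind

lemma compl_adj_iff (hn : 6 ≤ n) (he : Even n) (i j : Fin n) :
    (Dgraph n)ᶜ.Adj i j ↔ i ≠ j ∧ Nonadj n i j := by
  obtain ⟨k, rfl⟩ := he
  rw [compl_adj, Dgraph, fromRel_adj, dnRel_or_iff hn i.isLt j.isLt, Fin.val_ne_iff]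
  by_cases h : i = j <;> simp [h]

lemma exists_compl_adj_iff_of_lt (hn : 6 ≤ n) (he : Even n) {x : Fin n} (hx : (x : ℕ) < n - 1) :
    ∃ p q : Fin n, p ≠ q ∧ ∀ u, (Dgraph n)ᶜ.Adj x u ↔ u = p ∨ u = q := by
  have := Nat.even_iff.mp he
  simp only [compl_adj_iff hn he, Nonadj, ne_eq, Fin.ext_iff]
  rcases (by omega : (x : ℕ) ≤ 1 ∨ (2 ≤ (x : ℕ) ∧ (x : ℕ) ≤ n - 3) ∨ (x : ℕ) = n - 2)
    with h | h | h
  · exact ⟨⟨n - 2, by omega⟩, ⟨n - 1, by omega⟩, by simp; omega, fun u => by simp; omega⟩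
  · exact ⟨⟨x + 1 - 2 * (x % 2), by omega⟩, ⟨n - 1, by omega⟩, by simp; omega,
      fun u => by simp; omega⟩
  · exact ⟨⟨0, by omega⟩, ⟨1, by omega⟩, by simp, fun u => by simp; omega⟩

lemma exists_compl_adj_eq_or_eq (hn : 6 ≤ n) (he : Even n) {x v : Fin n}
    (hx : (x : ℕ) < n - 1) (hv : (Dgraph n)ᶜ.Adj x v) :
    ∃ y ≠ v, ∀ u, (Dgraph n)ᶜ.Adj x u → u = v ∨ u = y := by
  obtain ⟨p, q, hpq, hN⟩ := exists_compl_adj_iff_of_lt hn he hx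
  rcases (hN v).1 hv with rfl | rfl
  · exact ⟨q, hpq.symm, fun u hu => (hN u).1 hu⟩
  · exact ⟨p, hpq, fun u hu => ((hN u).1 hu).symm⟩

lemma exists_lt_three_ne (a b : ℕ) : ∃ c < 3, c ≠ a ∧ c ≠ b :=
  ⟨if a ≠ 0 ∧ b ≠ 0 then 0 else if a ≠ 1 ∧ b ≠ 1 then 1 else 2, by split_ifs <;> omega⟩

lemma exists_two_compl_adj_last (hn : 6 ≤ n) (he : Even n) {x : Fin n} (hx : (x : ℕ) = n - 1)
    (w : Fin n) :
    ∃ u₁ u₂, u₁ ≠ u₂ ∧ u₁ ≠ w ∧ u₂ ≠ w ∧ (Dgraph n)ᶜ.Adj x u₁ ∧ (Dgraph n)ᶜ.Adj x u₂ := by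
  obtain ⟨c, hc, hcw, -⟩ := exists_lt_three_ne w w
  obtain ⟨d, hd, hdw, hdc⟩ := exists_lt_three_ne w c
  refine ⟨⟨c, by omega⟩, ⟨d, by omega⟩, ?_, ?_, ?_, ?_, ?_⟩ <;>
    simp only [compl_adj_iff hn he, Nonadj, ne_eq, Fin.ext_iff] <;> omega

lemma exists_two_compl_adj (hn : 6 ≤ n) (he : Even n) (x : Fin n) :
    ∃ u₁ u₂, u₁ ≠ u₂ ∧ (Dgraph n)ᶜ.Adj x u₁ ∧ (Dgraph n)ᶜ.Adj x u₂ := by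
  by_cases hx : (x : ℕ) < n - 1
  · obtain ⟨p, q, hpq, hN⟩ := exists_compl_adj_iff_of_lt hn he hx
    exact ⟨p, q, hpq, (hN p).2 (Or.inl rfl), (hN q).2 (Or.inr rfl)⟩
  · have hx : (x : ℕ) = n - 1 := by have := x.isLt; omega
    obtain ⟨u₁, u₂, h12, -, -, h₁, h₂⟩ := exists_two_compl_adj_last hn he hx x
    exact ⟨u₁, u₂, h12, h₁, h₂⟩

lemma exists_lt_compl_adj (hn : 6 ≤ n) (he : Even n) (v : Fin n) :
    ∃ x : Fin n, (x : ℕ) < n - 1 ∧ (Dgraph n)ᶜ.Adj x v := by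
  have := Nat.even_iff.mp he
  simp only [compl_adj_iff hn he, Nonadj, ne_eq, Fin.ext_iff]
  rcases (by omega : (v : ℕ) ≤ 1 ∨ (2 ≤ (v : ℕ) ∧ (v : ℕ) ≤ n - 3) ∨ n - 2 ≤ (v : ℕ))
    with h | h | h
  · exact ⟨⟨n - 2, by omega⟩, by simp; omega, by simp; omega⟩
  · exact ⟨⟨v + 1 - 2 * (v % 2), by omega⟩, by simp; omega, by simp; omega⟩
  · exact ⟨⟨0, by omega⟩, by simp; omega, by simp; omega⟩

lemma exists_compl_adj_imp_of_adj (hn : 6 ≤ n) (he : Even n) {a b : Fin n}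
    (hab : (Dgraph n).Adj a b) :
    ∃ w : Fin n, ∀ u, (Dgraph n)ᶜ.Adj w u → u = a ∨ u = b ∨ (u : ℕ) = n - 1 := by
  have := Nat.even_iff.mp he
  have hab' : (a : ℕ) ≠ b ∧ ¬Nonadj n a b :=
    ⟨Fin.val_ne_of_ne hab.ne, fun h => ((compl_adj_iff hn he a b).2 ⟨hab.ne, h⟩).2 hab⟩
  simp only [compl_adj_iff hn he, Nonadj, ne_eq, Fin.ext_iff] at hab' ⊢
  rcases (by omega : (2 ≤ (a : ℕ) ∧ (a : ℕ) ≤ n - 3) ∨ (2 ≤ (b : ℕ) ∧ (b : ℕ) ≤ n - 3) ∨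
    ((a : ℕ) ≤ 1 ∧ (b : ℕ) ≤ 1) ∨ (n - 2 ≤ (a : ℕ) ∧ n - 2 ≤ (b : ℕ))) with h | h | h | h
  · exact ⟨⟨a + 1 - 2 * (a % 2), by omega⟩, fun u => by simp; omega⟩
  · exact ⟨⟨b + 1 - 2 * (b % 2), by omega⟩, fun u => by simp; omega⟩
  · exact ⟨⟨n - 2, by omega⟩, fun u => by simp; omega⟩
  · exact ⟨⟨0, by omega⟩, fun u => by simp; omega⟩

lemma romanNumber_eq (hn : 6 ≤ n) (he : Even n) : romanNumber (Dgraph n) = 4 := by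
  obtain ⟨p, q, -, hN⟩ := exists_compl_adj_iff_of_lt hn he (x := ⟨0, by omega⟩) (by simp; omega)
  exact le_antisymm (romanNumber_le_four fun u hu => (hN u).1 hu)
    (four_le_romanNumber (by simp; omega) (exists_two_compl_adj hn he))

lemma romanNumber_induce_ne (hn : 6 ≤ n) (he : Even n) (v : Fin n) :
    romanNumber ((Dgraph n).induce {u | u ≠ v}) = 3 := by
  obtain ⟨x, hx, hxv⟩ := exists_lt_compl_adj hn he v
  obtain ⟨y, hyv, hy⟩ := exists_compl_adj_eq_or_eq hn he hx hxv
  have := romanNumber_le_romanNumber_induce_ne_add_one (G := Dgraph n) v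
  rw [romanNumber_eq hn he] at this
  exact le_antisymm (romanNumber_induce_ne_le_three hxv.ne hyv hy) (by omega)

lemma vCritical (hn : 6 ≤ n) (he : Even n) : VCritical (Dgraph n) := fun v => by
  rw [romanNumber_induce_ne hn he, romanNumber_eq hn he]

lemma romanSaturated (hn : 6 ≤ n) (he : Even n) : RomanSaturated (Dgraph n) := by
  intro v w hvw hvw'
  have := romanNumber_le_romanNumber_sup_edge_add_one (G := Dgraph n) v w
  rw [romanNumber_eq hn he] at this ⊢
  refine le_antisymm ?_ (by omega)
  obtain ⟨x, o, hxo, hx, hc⟩ : ∃ x o : Fin n, s(v, w) = s(x, o) ∧ (x : ℕ) < n - 1 ∧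
      (Dgraph n)ᶜ.Adj x o := by
    by_cases hv : (v : ℕ) < n - 1
    · exact ⟨v, w, rfl, hv, hvw, hvw'⟩
    · exact ⟨w, v, Sym2.eq_swap, by have := v.isLt; simp [Fin.ext_iff] at hvw; omega,
        hvw.symm, fun h => hvw' h.symm⟩
  obtain ⟨y, -, hy⟩ := exists_compl_adj_eq_or_eq hn he hx hc
  rw [hxo]
  exact romanNumber_sup_edge_le_three hy

lemma romanNumber_deleteEdges_le_four (hn : 6 ≤ n) (he : Even n) (a b : Fin n) :
    romanNumber ((Dgraph n).deleteEdges {s(a, b)}) ≤ 4 := by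
  obtain ⟨c, hc, hca, hcb⟩ := exists_lt_three_ne a b
  obtain ⟨p, q, -, hN⟩ := exists_compl_adj_iff_of_lt hn he (x := ⟨c, by omega⟩) (by simp; omega)
  refine romanNumber_le_four fun u hu => (hN u).1 ⟨hu.1, fun hcu => hu.2 ?_⟩
  simp [hcu, Fin.ext_iff, hca, hcb]

lemma exists_four_le_romanNumber_deleteEdges_induce (hn : 6 ≤ n) (he : Even n) {a b : Fin n}
    (hab : (Dgraph n).Adj a b) :
    ∃ w, 4 ≤ romanNumber (((Dgraph n).deleteEdges {s(a, b)}).induce {u | u ≠ w}) := by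
  obtain ⟨w, hw⟩ := exists_compl_adj_imp_of_adj hn he hab
  refine ⟨w, four_le_romanNumber_induce_ne (by simp; omega) fun U _ => ?_⟩
  have hle : (Dgraph n)ᶜ ≤ ((Dgraph n).deleteEdges {s(a, b)})ᶜ :=
    compl_le_compl (deleteEdges_le _)
  by_cases hUw : (Dgraph n)ᶜ.Adj U w
  · rcases hw U hUw.symm with rfl | rfl | hlast
    · exact exists_two_compl_adj_deleteEdges hab hUw (exists_two_compl_adj hn he U)
    · rw [Sym2.eq_swap]
      exact exists_two_compl_adj_deleteEdges hab.symm hUw (exists_two_compl_adj hn he U)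
    · obtain ⟨u₁, u₂, h12, h₁, h₂, a₁, a₂⟩ := exists_two_compl_adj_last hn he hlast w
      exact ⟨u₁, u₂, h12, h₁, h₂, hle a₁, hle a₂⟩
  · obtain ⟨u₁, u₂, h12, a₁, a₂⟩ := exists_two_compl_adj hn he U
    exact ⟨u₁, u₂, h12, fun h => hUw (h ▸ a₁), fun h => hUw (h ▸ a₂), hle a₁, hle a₂⟩

lemma not_vCritical_deleteEdges (hn : 6 ≤ n) (he : Even n) :
    ∀ e ∈ (Dgraph n).edgeSet, ¬VCritical ((Dgraph n).deleteEdges {e}) := by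
  refine Sym2.ind fun a b hab hvc => ?_
  obtain ⟨w, hw⟩ := exists_four_le_romanNumber_deleteEdges_induce hn he ((mem_edgeSet _).1 hab)
  have := hvc w
  have := romanNumber_deleteEdges_le_four hn he a b
  omega

end Dgraph

/-- for every even `n ≥ 6`, `D_n` is a nonelementary v-critical, e-critical
and Roman saturated graph with γ_R(D_n) = 4. -/
theorem Dgraph_properties (n : ℕ) (hn : 6 ≤ n) (heven : Even n) :
    romanNumber (Dgraph n) < Fintype.card (Fin n) ∧
    VCritical (Dgraph n) ∧ ECritical (Dgraph n) ∧ RomanSaturated (Dgraph n) ∧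
    romanNumber (Dgraph n) = 4 := by
  have hγ := Dgraph.romanNumber_eq hn heven
  have hv := Dgraph.vCritical hn heven
  exact ⟨by rw [hγ, Fintype.card_fin]; omega, hv, ⟨hv, Dgraph.not_vCritical_deleteEdges hn heven⟩,
    Dgraph.romanSaturated hn heven, hγ⟩
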